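/- arXiv:2404.16826 — 4 statements merged into one kernel-verified Lean document; each statement's English description precedes it below -/
import Mathlib

section
/- Let $h : [t_k, t_{k+1}] \to \mathbb{R}$ be Lipschitz with constant $\omega > 0$, let $\Delta t = t_{k+1} - t_k$, and suppose $\int_{t_k}^{t_{k+1}} h(t)^2\,dt \le \epsilon$ where $0 < \epsilon \le \omega^2 \Delta t^3 / 4$. Then $\sup_{t \in [t_k,t_{k+1}]} |h(t)| \le (4\epsilon\omega)^{1/3}$. -/
open intervalIntegral MeasureTheory

lemma stmt6_aux (tk tk1 t₀ ℓ : ℝ) (h : ℝ → ℝ) (ω : ℝ) (hω : 0 < ω)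
    (hlip : LipschitzOnWith ω.toNNReal h (Set.Icc tk tk1))
    (ht₀ : t₀ ∈ Set.Icc tk tk1) (hℓ : 0 ≤ ℓ) (hsub : t₀ + ℓ ≤ tk1)
    (hc : ω * ℓ ≤ |h t₀|) :
    (|h t₀|^3 - (|h t₀| - ω*ℓ)^3)/(3*ω) ≤ ∫ t in tk..tk1, (h t)^2 := by
  set M := |h t₀| with hM
  have htk : tk ≤ t₀ := ht₀.1
  have htk1 : t₀ ≤ tk1 := ht₀.2
  have hcont : ContinuousOn h (Set.Icc tk tk1) := hlip.continuousOn
  have hsq : ContinuousOn (fun t => (h t)^2) (Set.Icc tk tk1) := hcont.pow 2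
  have hint1 : IntervalIntegrable (fun t => (h t)^2) volume tk t₀ :=
    (hsq.mono (Set.Icc_subset_Icc le_rfl htk1)).intervalIntegrable_of_Icc htk
  have hint2 : IntervalIntegrable (fun t => (h t)^2) volume t₀ (t₀+ℓ) :=
    (hsq.mono (Set.Icc_subset_Icc htk hsub)).intervalIntegrable_of_Icc (by linarith)
  have hint3 : IntervalIntegrable (fun t => (h t)^2) volume (t₀+ℓ) tk1 :=
    (hsq.mono (Set.Icc_subset_Icc (by linarith) le_rfl)).intervalIntegrable_of_Icc hsub
  -- pointwise bound on [t₀, t₀+ℓ]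
  have hpt : ∀ t ∈ Set.Icc t₀ (t₀+ℓ), (M - ω*(t - t₀))^2 ≤ (h t)^2 := by
    intro t ht
    have htmem : t ∈ Set.Icc tk tk1 := ⟨by linarith [ht.1], by linarith [ht.2]⟩
    have hd : dist (h t) (h t₀) ≤ ω * dist t t₀ := by
      have := hlip.dist_le_mul t htmem t₀ ht₀
      rwa [Real.coe_toNNReal _ hω.le] at this
    rw [Real.dist_eq, Real.dist_eq] at hd
    have habs : |t - t₀| = t - t₀ := abs_of_nonneg (by linarith [ht.1])
    rw [habs] at hd
    have hlow : M - ω*(t - t₀) ≤ |h t| := by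
      have : |h t₀| - |h t| ≤ |h t - h t₀| := by
        have := abs_sub_abs_le_abs_sub (h t₀) (h t)
        rwa [abs_sub_comm] at this
      linarith
    have hnn : 0 ≤ M - ω*(t - t₀) := by
      have h1 : ω * (t - t₀) ≤ ω * ℓ := by
        apply mul_le_mul_of_nonneg_left (by linarith [ht.2]) hω.le
      linarith
    calc (M - ω*(t - t₀))^2 ≤ |h t|^2 := by
          apply pow_le_pow_left₀ hnn hlow
      _ = (h t)^2 := sq_abs _
  -- closed form for lower integral
  have hclosed : (∫ t in t₀..t₀+ℓ, (M - ω*(t - t₀))^2)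
      = (M^3 - (M - ω*ℓ)^3)/(3*ω) := by
    have hder : ∀ t ∈ Set.uIcc t₀ (t₀+ℓ),
        HasDerivAt (fun t => -((M - ω*(t - t₀))^3/(3*ω))) ((M - ω*(t - t₀))^2) t := by
      intro t _
      have h1 : HasDerivAt (fun t => M - ω*(t - t₀)) (-ω) t := by
        simpa using (((hasDerivAt_id t).sub_const t₀).const_mul ω).const_sub M
      have h2 := (h1.pow 3).div_const (3*ω)
      have h3 := h2.neg
      have hω' : ω ≠ 0 := hω.ne'
      have heq : (M - ω*(t - t₀))^2 = -((3:ℕ) * (M - ω*(t - t₀)) ^ (3-1) * -ω / (3*ω)) := by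
        generalize (M - ω*(t - t₀)) = u
        field_simp
        ring
      rw [heq]
      exact h3
    have hcont2 : IntervalIntegrable (fun t => (M - ω*(t - t₀))^2) volume t₀ (t₀+ℓ) := by
      apply Continuous.intervalIntegrable
      continuity
    rw [intervalIntegral.integral_eq_sub_of_hasDerivAt hder hcont2]
    field_simp
    ring
  -- combine
  have hmono : (∫ t in t₀..t₀+ℓ, (M - ω*(t - t₀))^2) ≤ ∫ t in t₀..t₀+ℓ, (h t)^2 := by
    apply intervalIntegral.integral_mono_on (by linarith) _ hint2
    · intro t ht; exact hpt t ht
    · apply Continuous.intervalIntegrable; continuity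
  have hsplit : (∫ t in tk..tk1, (h t)^2)
      = (∫ t in tk..t₀, (h t)^2) + (∫ t in t₀..t₀+ℓ, (h t)^2) + (∫ t in t₀+ℓ..tk1, (h t)^2) := by
    rw [intervalIntegral.integral_add_adjacent_intervals hint1 hint2,
      intervalIntegral.integral_add_adjacent_intervals (hint1.trans hint2) hint3]
  have hnn1 : 0 ≤ ∫ t in tk..t₀, (h t)^2 :=
    intervalIntegral.integral_nonneg htk (fun t _ => sq_nonneg _)
  have hnn3 : 0 ≤ ∫ t in t₀+ℓ..tk1, (h t)^2 :=
    intervalIntegral.integral_nonneg hsub (fun t _ => sq_nonneg _)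
  rw [hsplit]
  rw [hclosed] at hmono
  linarith


lemma stmt6_alg (B M c : ℝ) (hB : 0 < B) (hBM : B ≤ M) (hcB : B/2 ≤ c) (hcM : c ≤ M) :
    7*B^3/8 ≤ M^3 - (M - c)^3 := by
  nlinarith [mul_nonneg (sub_nonneg.2 hcB) (sq_nonneg (M - c)),
    mul_nonneg (sub_nonneg.2 hcB) (sq_nonneg (M - B/2)),
    mul_nonneg (sub_nonneg.2 hcB) (mul_nonneg (sub_nonneg.2 hcM) (by linarith : (0:ℝ) ≤ M - B/2)),
    mul_nonneg (mul_nonneg (sub_nonneg.2 hBM) hB.le) (by linarith : (0:ℝ) ≤ M + B/2)]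

lemma stmt6_main (tk tk1 : ℝ) (hlt : tk < tk1) (h : ℝ → ℝ) (ω ε : ℝ)
    (hω : 0 < ω) (hlip : LipschitzOnWith ω.toNNReal h (Set.Icc tk tk1))
    (hε : 0 < ε) (hεle : ε ≤ ω^2 * (tk1 - tk)^3 / 4)
    (hint : (∫ t in tk..tk1, (h t)^2) ≤ ε)
    (t₀ : ℝ) (ht₀ : t₀ ∈ Set.Icc tk tk1) (hhalf : (tk1 - tk)/2 ≤ tk1 - t₀) :
    |h t₀| ≤ (4*ε*ω) ^ ((1:ℝ)/3) := by
  by_contra hcon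
  push_neg at hcon
  set B : ℝ := (4*ε*ω) ^ ((1:ℝ)/3) with hBdef
  set M : ℝ := |h t₀| with hMdef
  have h4εω : 0 < 4*ε*ω := by positivity
  have hBpos : 0 < B := Real.rpow_pos_of_pos h4εω _
  have hB3 : B^3 = 4*ε*ω := by
    rw [hBdef, ← Real.rpow_natCast ((4*ε*ω) ^ ((1:ℝ)/3)) 3, ← Real.rpow_mul h4εω.le]
    norm_num
  have hΔ : 0 < tk1 - tk := by linarith
  have hBle : B ≤ ω * (tk1 - tk) := by
    apply le_of_pow_le_pow_left₀ (n := 3) (by norm_num) (by positivity)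
    rw [hB3]
    nlinarith
  -- choose ℓ
  set ℓ : ℝ := min (M/ω) (tk1 - t₀) with hℓdef
  have hMpos : 0 < M := lt_trans hBpos hcon
  have hℓ0 : 0 ≤ ℓ := le_min (by positivity) (by linarith)
  have hsub : t₀ + ℓ ≤ tk1 := by
    have := min_le_right (M/ω) (tk1 - t₀)
    rw [← hℓdef] at this
    linarith
  have hc : ω * ℓ ≤ M := by
    have h1 : ℓ ≤ M/ω := min_le_left _ _
    calc ω * ℓ ≤ ω * (M/ω) := by apply mul_le_mul_of_nonneg_left h1 hω.le
      _ = M := by field_simp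
  have key := stmt6_aux tk tk1 t₀ ℓ h ω hω hlip ht₀ hℓ0 hsub hc
  rw [← hMdef] at key
  have key2 : M^3 - (M - ω*ℓ)^3 ≤ 3*ω*ε := by
    have h3ω : 0 < 3*ω := by positivity
    rw [div_le_iff₀ h3ω] at key
    calc M^3 - (M - ω*ℓ)^3 ≤ (∫ t in tk..tk1, (h t)^2) * (3*ω) := key
      _ ≤ ε * (3*ω) := by
          apply mul_le_mul_of_nonneg_right hint h3ω.le
      _ = 3*ω*ε := by ring
  -- lower bound on c := ω*ℓ
  have hcB : B/2 ≤ ω*ℓ := by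
    rcases min_cases (M/ω) (tk1 - t₀) with ⟨heq, _⟩ | ⟨heq, hle⟩
    · rw [hℓdef, heq]
      have : ω * (M/ω) = M := by field_simp
      rw [this]
      linarith
    · rw [hℓdef, heq]
      have h1 : ω * ((tk1 - tk)/2) ≤ ω * (tk1 - t₀) :=
        mul_le_mul_of_nonneg_left hhalf hω.le
      have h2 : B/2 ≤ ω * (tk1 - tk) / 2 := by linarith
      linarith
  have halg := stmt6_alg B M (ω*ℓ) hBpos hcon.le hcB hc
  rw [hB3] at halg
  nlinarith


/-- Pointwise violation bound for equality path constraints: if `h` is `ω`-Lipschitz on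
`[t_k, t_{k+1}]` and `∫ h² ≤ ε ≤ ω² Δt³ / 4`, then `|h(t)| ≤ (4εω)^{1/3}` on the interval. -/
theorem stmt_6 (tk tk1 : ℝ) (hlt : tk < tk1) (h : ℝ → ℝ) (ω ε : ℝ)
    (hω : 0 < ω) (hlip : LipschitzOnWith ω.toNNReal h (Set.Icc tk tk1))
    (hε : 0 < ε) (hεle : ε ≤ ω^2 * (tk1 - tk)^3 / 4)
    (hint : (∫ t in tk..tk1, (h t)^2) ≤ ε) :
    ∀ t ∈ Set.Icc tk tk1, |h t| ≤ (4*ε*ω) ^ ((1:ℝ)/3) := by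
  intro t₀ ht₀
  rcases le_total ((tk1 - tk)/2) (tk1 - t₀) with hhalf | hhalf
  · exact stmt6_main tk tk1 hlt h ω ε hω hlip hε hεle hint t₀ ht₀ hhalf
  · -- reflect
    set g : ℝ → ℝ := fun t => h (tk + tk1 - t) with hgdef
    have hmem : ∀ x ∈ Set.Icc tk tk1, tk + tk1 - x ∈ Set.Icc tk tk1 := by
      intro x hx
      exact ⟨by linarith [hx.2], by linarith [hx.1]⟩
    have hlipg : LipschitzOnWith ω.toNNReal g (Set.Icc tk tk1) := by
      apply LipschitzOnWith.of_dist_le_mul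
      intro x hx y hy
      have := hlip.dist_le_mul (tk + tk1 - x) (hmem x hx) (tk + tk1 - y) (hmem y hy)
      have hdd : dist (tk + tk1 - x) (tk + tk1 - y) = dist x y := by
        rw [Real.dist_eq, Real.dist_eq]
        rw [show tk + tk1 - x - (tk + tk1 - y) = -(x - y) by ring, abs_neg]
      rw [hdd] at this
      exact this
    have hintg : (∫ t in tk..tk1, (g t)^2) ≤ ε := by
      have : (∫ t in tk..tk1, (g t)^2) = ∫ t in tk..tk1, (h t)^2 := by
        rw [hgdef]
        have := intervalIntegral.integral_comp_sub_left (fun t => (h t)^2) (tk + tk1)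
          (a := tk) (b := tk1)
        simpa using this
      rw [this]
      exact hint
    have ht₀' : tk + tk1 - t₀ ∈ Set.Icc tk tk1 := hmem t₀ ht₀
    have hhalf' : (tk1 - tk)/2 ≤ tk1 - (tk + tk1 - t₀) := by linarith [ht₀.1]
    have := stmt6_main tk tk1 hlt g ω ε hω hlipg hε hεle hintg (tk + tk1 - t₀) ht₀' hhalf'
    have hg : g (tk + tk1 - t₀) = h t₀ := by
      rw [hgdef]; norm_num
    rwa [hg] at this
end

section
/- Let $g : [t_k, t_{k+1}] \to \mathbb{R}$ be Lipschitz with constant $\omega > 0$, let $\Delta t = t_{k+1} - t_k$, and suppose $\int_{t_k}^{t_{k+1}} \max\{0, g(t)\}^2 dt \le \epsilon$ where $0 < \epsilon \le \omega^2 \Delta t^3 / 4$. Then $g(t) \le (4\epsilon\omega)^{1/3}$ for all $t \in [t_k, t_{k+1}]$. -/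
open intervalIntegral Set

lemma tent_integral (c s M ω : ℝ) (hω : ω ≠ 0) :
    ∫ t in c..(c+s), (M - ω*(t-c))^2 = (M^3 - (M - ω*s)^3)/(3*ω) := by
  have h : ∀ t ∈ Set.uIcc c (c+s), HasDerivAt (fun t => -(M - ω*(t-c))^3/(3*ω))
      ((M - ω*(t-c))^2) t := by
    intro t _
    have h1 : HasDerivAt (fun t => M - ω*(t-c)) (-ω) t := by
      simpa using (((hasDerivAt_id t).sub_const c).const_mul ω).const_sub M
    have h2 := ((h1.pow 3).neg).div_const (3*ω)
    convert h2 using 1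
    · rfl
    · rfl
    · rfl
    rw [eq_div_iff (mul_ne_zero three_ne_zero hω)]
    ring
  rw [intervalIntegral.integral_eq_sub_of_hasDerivAt h (by
    apply Continuous.intervalIntegrable; continuity)]
  field_simp
  ring

lemma tent_integral' (c s M ω : ℝ) (hω : ω ≠ 0) :
    ∫ t in (c-s)..c, (M - ω*(c-t))^2 = (M^3 - (M - ω*s)^3)/(3*ω) := by
  have h := intervalIntegral.integral_comp_sub_left (a := c - s) (b := c)
      (fun u => (M - ω*u)^2) c
  simp only [sub_self, sub_sub_cancel] at h
  rw [h]
  have h2 := tent_integral 0 s M ω hω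
  simpa using h2

set_option maxHeartbeats 1000000 in
/-- Pointwise violation bound for inequality path constraints: if `g` is `ω`-Lipschitz on
`[t_k, t_{k+1}]` and `∫ max{0,g}² ≤ ε ≤ ω² Δt³ / 4`, then `g(t) ≤ (4εω)^{1/3}` on the interval. -/
theorem stmt_7 (tk tk1 : ℝ) (hlt : tk < tk1) (g : ℝ → ℝ) (ω ε : ℝ)
    (hω : 0 < ω) (hlip : LipschitzOnWith ω.toNNReal g (Set.Icc tk tk1))
    (hε : 0 < ε) (hεle : ε ≤ ω^2 * (tk1 - tk)^3 / 4)
    (hint : (∫ t in tk..tk1, (max 0 (g t))^2) ≤ ε) :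
    ∀ t ∈ Set.Icc tk tk1, g t ≤ (4*ε*ω) ^ ((1:ℝ)/3) := by
  intro t₀ ht₀
  by_contra hM
  push_neg at hM
  set M := g t₀ with hMdef
  have hB : (0:ℝ) < (4*ε*ω) ^ ((1:ℝ)/3) := Real.rpow_pos_of_pos (by positivity) _
  have hMpos : 0 < M := lt_trans hB hM
  have hBcube : ((4*ε*ω) ^ ((1:ℝ)/3))^(3:ℕ) = 4*ε*ω := by
    rw [← Real.rpow_natCast ((4*ε*ω) ^ ((1:ℝ)/3)) 3, ← Real.rpow_mul (by positivity)]
    norm_num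
  have hM3 : 4*ε*ω < M^3 := by
    calc 4*ε*ω = ((4*ε*ω) ^ ((1:ℝ)/3))^(3:ℕ) := hBcube.symm
    _ < M^3 := by exact pow_lt_pow_left₀ hM hB.le (by norm_num)
  have hΔ : 0 < tk1 - tk := sub_pos.mpr hlt
  set s : ℝ := min (M/ω) (tk1 - tk) / 2 with hs_def
  have hs_pos : 0 < s := by positivity
  have hs_half : s ≤ (tk1 - tk)/2 := by
    apply div_le_div_of_nonneg_right (min_le_right _ _) -- may need fix
    norm_num
  have hωs : ω * s ≤ M/2 := by
    have h1 : s ≤ (M/ω)/2 := by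
      apply div_le_div_of_nonneg_right (min_le_left _ _)
      norm_num
    calc ω * s ≤ ω * ((M/ω)/2) := by nlinarith
    _ = M/2 := by field_simp
  -- continuity / integrability of the integrand
  have hg_cont : ContinuousOn g (Set.Icc tk tk1) := hlip.continuousOn
  have hcont : ContinuousOn (fun t => (max 0 (g t))^2) (Set.Icc tk tk1) :=
    (((continuous_const.max continuous_id).comp_continuousOn hg_cont)).pow 2
  have hint_sub : ∀ a b : ℝ, tk ≤ a → a ≤ b → b ≤ tk1 →
      IntervalIntegrable (fun t => (max 0 (g t))^2) MeasureTheory.volume a b := by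
    intro a b h1 h2 h3
    apply ContinuousOn.intervalIntegrable
    apply hcont.mono
    rw [Set.uIcc_of_le h2]
    exact Set.Icc_subset_Icc h1 h3
  -- Lipschitz pointwise lower bound
  have hlb : ∀ t ∈ Set.Icc tk tk1, M - ω * |t - t₀| ≤ g t := by
    intro t ht
    have := hlip.dist_le_mul t₀ ht₀ t ht
    rw [Real.coe_toNNReal ω hω.le] at this
    rw [Real.dist_eq, Real.dist_eq] at this
    have h1 : M - g t ≤ |M - g t| := le_abs_self _
    have h2 : |t₀ - t| = |t - t₀| := abs_sub_comm _ _
    linarith [this, h1, h2 ▸ this]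
  -- the key bound: ε ≥ (M³ - (M-ωs)³)/(3ω)
  have hkey : (M^3 - (M - ω*s)^3)/(3*ω) ≤ ε := by
    rcases le_or_gt t₀ ((tk + tk1)/2) with hside | hside
    · -- right side: [t₀, t₀ + s] ⊆ [tk, tk1]
      have hsub1 : tk ≤ t₀ := ht₀.1
      have hsub2 : t₀ + s ≤ tk1 := by
        have := ht₀.1
        linarith [hs_half]
      have hpt : ∀ t ∈ Set.Icc t₀ (t₀ + s),
          (M - ω*(t - t₀))^2 ≤ (max 0 (g t))^2 := by
        intro t ht
        have ht' : t ∈ Set.Icc tk tk1 := ⟨le_trans hsub1 ht.1, le_trans ht.2 hsub2⟩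
        have habs : |t - t₀| = t - t₀ := abs_of_nonneg (by linarith [ht.1])
        have hglb : M - ω*(t - t₀) ≤ g t := by
          have := hlb t ht'
          rw [habs] at this; linarith
        have hnn : 0 ≤ M - ω*(t - t₀) := by
          have : ω * (t - t₀) ≤ ω * s := by
            apply mul_le_mul_of_nonneg_left _ hω.le
            linarith [ht.2]
          linarith [hωs, hMpos]
        have : M - ω*(t - t₀) ≤ max 0 (g t) := le_trans hglb (le_max_right _ _)
        exact pow_le_pow_left₀ hnn this 2
      have hmono : ∫ t in t₀..(t₀+s), (M - ω*(t-t₀))^2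
          ≤ ∫ t in t₀..(t₀+s), (max 0 (g t))^2 := by
        apply intervalIntegral.integral_mono_on (by linarith)
        · apply Continuous.intervalIntegrable; continuity
        · exact hint_sub _ _ hsub1 (by linarith) hsub2
        · exact hpt
      have hsplit : ∫ t in t₀..(t₀+s), (max 0 (g t))^2 ≤ ∫ t in tk..tk1, (max 0 (g t))^2 := by
        have e1 : (∫ t in tk..t₀, (max 0 (g t))^2) + (∫ t in t₀..(t₀+s), (max 0 (g t))^2)
            = ∫ t in tk..(t₀+s), (max 0 (g t))^2 :=
          intervalIntegral.integral_add_adjacent_intervals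
            (hint_sub _ _ le_rfl ht₀.1 (by linarith))
            (hint_sub _ _ ht₀.1 (by linarith) hsub2)
        have e2 : (∫ t in tk..(t₀+s), (max 0 (g t))^2) + (∫ t in (t₀+s)..tk1, (max 0 (g t))^2)
            = ∫ t in tk..tk1, (max 0 (g t))^2 :=
          intervalIntegral.integral_add_adjacent_intervals
            (hint_sub _ _ le_rfl (by linarith [ht₀.1]) hsub2)
            (hint_sub _ _ (by linarith [ht₀.1]) hsub2 le_rfl)
        have n1 : 0 ≤ ∫ t in tk..t₀, (max 0 (g t))^2 :=
          intervalIntegral.integral_nonneg ht₀.1 (fun t _ => by positivity)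
        have n2 : 0 ≤ ∫ t in (t₀+s)..tk1, (max 0 (g t))^2 :=
          intervalIntegral.integral_nonneg hsub2 (fun t _ => by positivity)
        linarith
      have hval := tent_integral t₀ s M ω hω.ne'
      rw [hval] at hmono
      linarith
    · -- left side: [t₀ - s, t₀] ⊆ [tk, tk1]
      have hsub2 : t₀ ≤ tk1 := ht₀.2
      have hsub1 : tk ≤ t₀ - s := by linarith [hs_half]
      have hpt : ∀ t ∈ Set.Icc (t₀ - s) t₀,
          (M - ω*(t₀ - t))^2 ≤ (max 0 (g t))^2 := by
        intro t ht
        have ht' : t ∈ Set.Icc tk tk1 := ⟨le_trans hsub1 ht.1, le_trans ht.2 hsub2⟩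
        have habs : |t - t₀| = t₀ - t := by
          rw [abs_sub_comm]; exact abs_of_nonneg (by linarith [ht.2])
        have hglb : M - ω*(t₀ - t) ≤ g t := by
          have := hlb t ht'
          rw [habs] at this; linarith
        have hnn : 0 ≤ M - ω*(t₀ - t) := by
          have : ω * (t₀ - t) ≤ ω * s := by
            apply mul_le_mul_of_nonneg_left _ hω.le
            linarith [ht.1]
          linarith [hωs, hMpos]
        have : M - ω*(t₀ - t) ≤ max 0 (g t) := le_trans hglb (le_max_right _ _)
        exact pow_le_pow_left₀ hnn this 2
      have hmono : ∫ t in (t₀-s)..t₀, (M - ω*(t₀-t))^2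
          ≤ ∫ t in (t₀-s)..t₀, (max 0 (g t))^2 := by
        apply intervalIntegral.integral_mono_on (by linarith)
        · apply Continuous.intervalIntegrable; continuity
        · exact hint_sub _ _ hsub1 (by linarith) hsub2
        · exact hpt
      have hsplit : ∫ t in (t₀-s)..t₀, (max 0 (g t))^2 ≤ ∫ t in tk..tk1, (max 0 (g t))^2 := by
        have e1 : (∫ t in tk..(t₀-s), (max 0 (g t))^2) + (∫ t in (t₀-s)..t₀, (max 0 (g t))^2)
            = ∫ t in tk..t₀, (max 0 (g t))^2 :=
          intervalIntegral.integral_add_adjacent_intervals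
            (hint_sub _ _ le_rfl hsub1 (by linarith))
            (hint_sub _ _ hsub1 (by linarith) hsub2)
        have e2 : (∫ t in tk..t₀, (max 0 (g t))^2) + (∫ t in t₀..tk1, (max 0 (g t))^2)
            = ∫ t in tk..tk1, (max 0 (g t))^2 :=
          intervalIntegral.integral_add_adjacent_intervals
            (hint_sub _ _ le_rfl ht₀.1 hsub2)
            (hint_sub _ _ ht₀.1 hsub2 le_rfl)
        have n1 : 0 ≤ ∫ t in tk..(t₀-s), (max 0 (g t))^2 :=
          intervalIntegral.integral_nonneg hsub1 (fun t _ => by positivity)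
        have n2 : 0 ≤ ∫ t in t₀..tk1, (max 0 (g t))^2 :=
          intervalIntegral.integral_nonneg hsub2 (fun t _ => by positivity)
        linarith
      have hval := tent_integral' t₀ s M ω hω.ne'
      rw [hval] at hmono
      linarith
  -- final arithmetic contradiction
  have hkey' : M^3 - (M - ω*s)^3 ≤ ε * (3*ω) :=
    (div_le_iff₀ (by positivity : (0:ℝ) < 3*ω)).mp hkey
  rcases le_or_gt (M/ω) (tk1 - tk) with hc | hc
  · -- s = (M/ω)/2, so ω*s = M/2
    have hseq : ω * s = M/2 := by
      rw [hs_def, min_eq_left hc]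
      field_simp
    rw [hseq] at hkey'
    nlinarith [hM3, hε, hω, hMpos]
  · -- s = (tk1-tk)/2, and M > ω*(tk1-tk)
    have hseq : ω * s = ω * (tk1 - tk)/2 := by
      rw [hs_def, min_eq_right hc.le]
      ring
    have hMbig : ω * (tk1 - tk) < M := by
      nlinarith [(lt_div_iff₀ hω).mp hc]
    rw [hseq] at hkey'
    nlinarith [hM3, hε, hω, hΔ, hMbig, hεle,
      mul_pos hω hΔ,
      mul_nonneg (mul_nonneg (mul_pos hω hΔ).le (sub_pos.mpr hMbig).le)
        (by positivity : (0:ℝ) ≤ M + ω*(tk1-tk)/2)]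
end

section
/- Let $h : [a,b] \to \mathbb{R}$ be $\omega$-Lipschitz, suppose $|h|$ attains its maximum value $\hat{h} > 0$ at $t_{\max} \in [a, b]$ with $b - t_{\max} \ge \hat{h}/(2\omega)$. Then $\int_a^b h(t)^2\,dt \ge \hat{h}^3/(4\omega)$. -/
/-- Triangular-area estimate: if `|h|` attains its maximum `hh > 0` at `t_max` with
`b - t_max ≥ hh/(2ω)`, then `∫_a^b h² ≥ hh³/(4ω)`. -/
theorem stmt_8 (a b : ℝ) (hlt : a < b) (h : ℝ → ℝ) (ω : ℝ) (hω : 0 < ω)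
    (hlip : LipschitzOnWith ω.toNNReal h (Set.Icc a b))
    (hh tmax : ℝ) (hhhpos : 0 < hh) (htmax : tmax ∈ Set.Icc a b)
    (hattain : |h tmax| = hh) (hmax : ∀ t ∈ Set.Icc a b, |h t| ≤ hh)
    (hroom : hh / (2*ω) ≤ b - tmax) :
    hh^3 / (4*ω) ≤ ∫ t in a..b, (h t)^2 := by
  set c := tmax with hc
  set δ := hh / (2*ω) with hδdef
  have hω2 : (0:ℝ) < 2*ω := by linarith
  have hδpos : 0 < δ := div_pos hhhpos hω2
  have hωδ : ω * δ = hh / 2 := by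
    field_simp [hδdef]
    rw [hδdef]; field_simp
  have hac : a ≤ c := htmax.1
  have hdb : c + δ ≤ b := by linarith [hroom]
  have hcd : c ≤ c + δ := by linarith
  have hcont : ContinuousOn h (Set.Icc a b) := hlip.continuousOn
  have hsq_cont : ContinuousOn (fun t => (h t)^2) (Set.Icc a b) := hcont.pow 2
  have hint : ∀ u v, a ≤ u → u ≤ v → v ≤ b →
      IntervalIntegrable (fun t => (h t)^2) MeasureTheory.volume u v := by
    intro u v hu huv hv
    apply ContinuousOn.intervalIntegrable
    apply hsq_cont.mono
    rw [Set.uIcc_of_le huv]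
    exact Set.Icc_subset_Icc hu hv
  -- pointwise bound on [c, c+δ]
  have hpt : ∀ t ∈ Set.Icc c (c+δ), (hh - ω*(t - c))^2 ≤ (h t)^2 := by
    intro t ht
    have htab : t ∈ Set.Icc a b := ⟨le_trans hac ht.1, le_trans ht.2 hdb⟩
    have hd : dist (h t) (h c) ≤ ω * dist t c := by
      have := hlip.dist_le_mul t htab c htmax
      rwa [Real.coe_toNNReal ω hω.le] at this
    have h1 : |h t - h c| ≤ ω * (t - c) := by
      rw [Real.dist_eq, Real.dist_eq] at hd
      have he : |t - c| = t - c := abs_of_nonneg (by linarith [ht.1])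
      rwa [he] at hd
    have h2 : hh - ω*(t-c) ≤ |h t| := by
      have habs := abs_sub_abs_le_abs_sub (h c) (h t)
      rw [hattain] at habs
      have : |h c - h t| = |h t - h c| := abs_sub_comm _ _
      linarith [this ▸ habs]
    have h3 : ω * (t - c) ≤ hh / 2 := by
      have : ω * (t - c) ≤ ω * δ := by
        apply mul_le_mul_of_nonneg_left _ hω.le
        linarith [ht.2]
      linarith [hωδ ▸ this]
    nlinarith [abs_nonneg (h t), sq_abs (h t)]
  -- tent integral
  have hderiv : ∀ t ∈ Set.uIcc c (c+δ),
      HasDerivAt (fun t => -(hh - ω*(t-c))^3/(3*ω)) ((hh - ω*(t-c))^2) t := by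
    intro t _
    have h1 : HasDerivAt (fun t : ℝ => hh - ω*(t-c)) (-ω) t := by
      have := (((hasDerivAt_id t).sub_const c).const_mul ω).const_sub hh
      simpa using this
    have h2 := h1.pow 3
    have h3 := h2.neg.div_const (3*ω)
    refine h3.congr_deriv ?_
    rw [div_eq_iff (mul_ne_zero three_ne_zero hω.ne')]
    simp only [Nat.cast_ofNat]
    ring
  have htent_int : IntervalIntegrable (fun t => (hh - ω*(t-c))^2) MeasureTheory.volume c (c+δ) := by
    apply Continuous.intervalIntegrable
    fun_prop
  have htent : ∫ t in c..(c+δ), (hh - ω*(t-c))^2 =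
      -(hh - ω*δ)^3/(3*ω) - (-(hh)^3/(3*ω)) := by
    have := intervalIntegral.integral_eq_sub_of_hasDerivAt hderiv htent_int
    simpa using this
  have hmono : ∫ t in c..(c+δ), (hh - ω*(t-c))^2 ≤ ∫ t in c..(c+δ), (h t)^2 := by
    apply intervalIntegral.integral_mono_on hcd htent_int (hint c (c+δ) hac hcd hdb)
    exact hpt
  have i1 := hint a c le_rfl hac (le_trans hcd hdb)
  have i2 := hint c (c+δ) hac hcd hdb
  have i3 := hint (c+δ) b (le_trans hac hcd) hdb le_rfl
  have i12 := hint a (c+δ) le_rfl (le_trans hac hcd) hdb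
  have e2 : (∫ t in a..c, (h t)^2) + ∫ t in c..(c+δ), (h t)^2 = ∫ t in a..(c+δ), (h t)^2 :=
    intervalIntegral.integral_add_adjacent_intervals i1 i2
  have e1 : (∫ t in a..(c+δ), (h t)^2) + ∫ t in (c+δ)..b, (h t)^2 = ∫ t in a..b, (h t)^2 :=
    intervalIntegral.integral_add_adjacent_intervals i12 i3
  have n1 : 0 ≤ ∫ t in a..c, (h t)^2 :=
    intervalIntegral.integral_nonneg hac (fun t _ => sq_nonneg _)
  have n3 : 0 ≤ ∫ t in (c+δ)..b, (h t)^2 :=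
    intervalIntegral.integral_nonneg hdb (fun t _ => sq_nonneg _)
  have hval : hh^3 / (4*ω) ≤ ∫ t in c..(c+δ), (hh - ω*(t-c))^2 := by
    rw [htent, hωδ]
    have he : -(hh - hh/2)^3/(3*ω) - (-(hh)^3/(3*ω)) = 7*hh^3/(24*ω) := by
      field_simp
      ring
    rw [he, div_le_div_iff₀ (by linarith) (by linarith)]
    nlinarith [mul_pos (mul_pos hhhpos hhhpos) (mul_pos hhhpos hω)]
  linarith [hmono, hval]
end

section
/- Let $\Theta(z) = J(z) + H(G(z))$ where $J : \mathbb{R}^n \to \mathbb{R} \cup \{+\infty\}$ is proper closed convex, $H : \mathbb{R}^m \to \mathbb{R}$ is convex and $\alpha$-Lipschitz, and $G : \mathbb{R}^n \to \mathbb{R}^m$ is differentiable with $\beta$-Lipschitz gradient. For $\rho > 0$ and $z_k$, let $z_{k+1}$ be the minimizer of $z \mapsto J(z) + H(G(z_k) + \nabla G(z_k)(z - z_k)) + \frac{1}{2\rho}\|z - z_k\|^2$, and let $\mathcal{G}_\rho(z_k) = (z_k - z_{k+1})/\rho$. Then $\Theta(z_k) \ge \Theta(z_{k+1}) + \frac{\rho}{2}(2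 - \alpha\beta\rho)\|\mathcal{G}_\rho(z_k)\|^2$. -/
set_option maxHeartbeats 1000000

lemma quad_taylor_aux {E F : Type*} [NormedAddCommGroup E] [NormedSpace ℝ E]
    [NormedAddCommGroup F] [NormedSpace ℝ F] {G : E → F} {β : NNReal}
    (hG : Differentiable ℝ G) (hGlip : LipschitzWith β (fun z => fderiv ℝ G z))
    (x y : E) :
    ‖G y - G x - fderiv ℝ G x (y - x)‖ ≤ (β : ℝ)/2 * ‖y - x‖^2 := by
  set d : E := y - x with hd
  set A := fderiv ℝ G x with hA
  set g : ℝ → F := fun t => G (x + t • d) - t • (A d) - G x with hg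
  have hline : ∀ t : ℝ, HasDerivAt (fun s : ℝ => x + s • d) d t := by
    intro t
    simpa using ((hasDerivAt_id t).smul_const d).const_add x
  have hg' : ∀ t : ℝ, HasDerivAt g (fderiv ℝ G (x + t • d) d - A d) t := by
    intro t
    have h1 : HasDerivAt (fun s : ℝ => G (x + s • d)) (fderiv ℝ G (x + t • d) d) t :=
      (hG (x + t • d)).hasFDerivAt.comp_hasDerivAt t (hline t)
    simpa [hg] using (h1.sub ((hasDerivAt_id t).smul_const (A d))).sub_const (G x)
  set B : ℝ → ℝ := fun t => (β : ℝ)/2 * ‖d‖^2 * t^2 with hB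
  have hB' : ∀ t : ℝ, HasDerivAt B ((β : ℝ) * ‖d‖^2 * t) t := by
    intro t
    have := (hasDerivAt_pow 2 t).const_mul ((β : ℝ)/2 * ‖d‖^2)
    refine this.congr_deriv ?_
    ring
  have key : ∀ u ∈ Set.Icc (0:ℝ) 1, ‖g u‖ ≤ B u := by
    apply image_norm_le_of_norm_deriv_right_le_deriv_boundary
      (f' := fun t => fderiv ℝ G (x + t • d) d - A d)
      (fun t _ => (hg' t).continuousAt.continuousWithinAt)
      (fun t _ => (hg' t).hasDerivWithinAt) ?_ hB'
    · intro t ht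
      have h1 : ‖fderiv ℝ G (x + t • d) d - A d‖
          ≤ ‖fderiv ℝ G (x + t • d) - A‖ * ‖d‖ := by
        rw [← ContinuousLinearMap.sub_apply]
        exact (fderiv ℝ G (x + t • d) - A).le_opNorm d
      have h2 : ‖fderiv ℝ G (x + t • d) - A‖ ≤ (β : ℝ) * ‖t • d‖ := by
        have := hGlip.dist_le_mul (x + t • d) x
        simpa [dist_eq_norm] using this
      calc ‖fderiv ℝ G (x + t • d) d - A d‖ ≤ (β : ℝ) * ‖t • d‖ * ‖d‖ :=
            h1.trans (by gcongr)
        _ = (β : ℝ) * ‖d‖^2 * t := by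
            rw [norm_smul, Real.norm_eq_abs, abs_of_nonneg ht.1]; ring
    · simp [hg, hB]
  have h := key 1 (by norm_num)
  have e : g 1 = G y - G x - A (y - x) := by
    simp only [hg, one_smul]
    rw [hd]
    rw [show x + (y - x) = y by abel]
    abel
  rw [e] at h
  simpa [hB, hd] using h

/-- Prox-linear descent lemma: for `Θ = J + H ∘ G` with `J` proper closed convex
(extended-real-valued), `H` convex `α`-Lipschitz, `G` differentiable with `β`-Lipschitz
gradient, if `z_{k+1}` minimizes the prox-linear model at `z_k` with weight `1/(2ρ)`, then
`Θ(z_k) ≥ Θ(z_{k+1}) + (ρ/2)(2 - αβρ)‖𝒢_ρ(z_k)‖²` where `𝒢_ρ(z_k) = (z_k - z_{k+1})/ρ`. -/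
theorem stmt_15 {n m : ℕ}
    (J : EuclideanSpace ℝ (Fin n) → EReal)
    (H : EuclideanSpace ℝ (Fin m) → ℝ)
    (G : EuclideanSpace ℝ (Fin n) → EuclideanSpace ℝ (Fin m))
    (α β : NNReal)
    (hαlip : LipschitzWith α H) (hHconv : ConvexOn ℝ Set.univ H)
    (hJproper : ∃ z, J z ≠ ⊤) (hJbot : ∀ z, J z ≠ ⊥)
    (hJlsc : LowerSemicontinuous J)
    (hJconv : ∀ x y : EuclideanSpace ℝ (Fin n), ∀ ca cb : ℝ,
      0 ≤ ca → 0 ≤ cb → ca + cb = 1 →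
      J (ca • x + cb • y) ≤ (ca : EReal) * J x + (cb : EReal) * J y)
    (hG : Differentiable ℝ G)
    (hGlip : LipschitzWith β (fun z => fderiv ℝ G z))
    (ρ : ℝ) (hρ : 0 < ρ)
    (zk zk1 : EuclideanSpace ℝ (Fin n))
    (hmin : ∀ z,
      J zk1 + ((H (G zk + fderiv ℝ G zk (zk1 - zk))
                  + 1/(2*ρ) * ‖zk1 - zk‖^2 : ℝ) : EReal)
        ≤ J z + ((H (G zk + fderiv ℝ G zk (z - zk))
                  + 1/(2*ρ) * ‖z - zk‖^2 : ℝ) : EReal)) :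
    J zk1 + ((H (G zk1) : ℝ) : EReal)
      + ((ρ/2 * (2 - (α:ℝ)*(β:ℝ)*ρ) * ‖(1/ρ) • (zk - zk1)‖^2 : ℝ) : EReal)
      ≤ J zk + ((H (G zk) : ℝ) : EReal) := by
  by_cases hJkt : J zk = ⊤
  · rw [hJkt, EReal.top_add_of_ne_bot (EReal.coe_ne_bot _)]
    exact le_top
  obtain ⟨a, ha⟩ := EReal.canLift.prf (J zk) ⟨hJkt, hJbot zk⟩
  set A := fderiv ℝ G zk with hA
  set d := zk1 - zk with hd
  set HL := H (G zk + A d) with hHL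
  -- J zk1 is finite
  have hk1t : J zk1 ≠ ⊤ := by
    intro htop
    have h0 := hmin zk
    rw [htop, ← ha] at h0
    simp only [sub_self, map_zero, add_zero, norm_zero] at h0
    rw [EReal.top_add_of_ne_bot (EReal.coe_ne_bot _), top_le_iff, ← EReal.coe_add] at h0
    exact EReal.coe_ne_top _ h0
  obtain ⟨b, hb⟩ := EReal.canLift.prf (J zk1) ⟨hk1t, hJbot zk1⟩
  -- Step 1: strong-convexity-type descent of the model
  have step1 : b + HL + (1/ρ) * ‖d‖^2 ≤ a + H (G zk) := by
    have key : ∀ t : ℝ, 0 < t → t ≤ 1 →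
        b + HL + (2 - t) * (1/(2*ρ) * ‖d‖^2) ≤ a + H (G zk) := by
      intro t ht0 ht1
      set w := (1-t) • zk1 + t • zk with hw
      have hwz : w - zk = (1-t) • d := by
        rw [hw, hd]; module
      have hJw : J w ≤ (((1-t)*b + t*a : ℝ) : EReal) := by
        have h0 := hJconv zk1 zk (1-t) t (by linarith) ht0.le (by ring)
        rw [← ha, ← hb] at h0
        have h1 : ((1-t : ℝ) : EReal) * (b:EReal) + ((t:ℝ) : EReal) * (a:EReal)
            = (((1-t)*b + t*a : ℝ) : EReal) := by
          rw [← EReal.coe_mul, ← EReal.coe_mul, ← EReal.coe_add]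
        exact h1 ▸ h0
      have hHc : H (G zk + (1-t) • A d) ≤ (1-t) * HL + t * H (G zk) := by
        have h1 := hHconv.2 (Set.mem_univ (G zk + A d)) (Set.mem_univ (G zk))
          (by linarith : (0:ℝ) ≤ 1 - t) ht0.le (by ring)
        have h2 : (1-t) • (G zk + A d) + t • (G zk) = G zk + (1-t) • A d := by
          module
        rwa [h2] at h1
      have hmw := hmin w
      rw [hwz, map_smul] at hmw
      have hmw2 : J zk1 + ((HL + 1/(2*ρ) * ‖d‖^2 : ℝ) : EReal)
          ≤ (((1-t)*b + t*a : ℝ) : EReal)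
            + ((H (G zk + (1-t) • A d) + 1/(2*ρ) * ‖(1-t) • d‖^2 : ℝ) : EReal) :=
        hmw.trans (add_le_add_left hJw _)
      rw [← hb, ← EReal.coe_add, ← EReal.coe_add, EReal.coe_le_coe_iff] at hmw2
      have hns : ‖(1-t) • d‖^2 = (1-t)^2 * ‖d‖^2 := by
        rw [norm_smul, Real.norm_eq_abs, abs_of_nonneg (by linarith : (0:ℝ) ≤ 1-t)]
        ring
      rw [hns] at hmw2
      -- divide by t
      have hmul : t * (b + HL + (2 - t) * (1/(2*ρ) * ‖d‖^2)) ≤ t * (a + H (G zk)) := by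
        have hr : 1/(2*ρ) * ((1-t)^2 * ‖d‖^2) = (1-t)^2 * (1/(2*ρ) * ‖d‖^2) := by ring
        rw [hr] at hmw2
        generalize 1/(2*ρ) * ‖d‖^2 = X at hmw2 ⊢
        nlinarith [hmw2, hHc]
      exact le_of_mul_le_mul_left hmul ht0
    refine le_of_forall_pos_le_add ?_
    intro ε hε
    set c := 1/(2*ρ) * ‖d‖^2 with hc
    have hc0 : 0 ≤ c := by positivity
    set t := min 1 (ε / (c+1)) with ht
    have ht0 : 0 < t := lt_min one_pos (by positivity)
    have htc : t * c ≤ ε := by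
      have h1 : t ≤ ε / (c+1) := min_le_right _ _
      have h2 : t * c ≤ (ε / (c+1)) * c := by
        apply mul_le_mul_of_nonneg_right h1 hc0
      have h3 : (ε / (c+1)) * c ≤ ε := by
        rw [div_mul_eq_mul_div, div_le_iff₀ (by linarith)]
        nlinarith
      linarith
    have := key t ht0 (min_le_left _ _)
    have h2c : (1/ρ) * ‖d‖^2 = 2 * c := by
      rw [hc]; field_simp
    linarith
  -- Step 2: Lipschitz + Taylor bound
  have step2 : H (G zk1) ≤ HL + (α:ℝ) * ((β:ℝ)/2) * ‖d‖^2 := by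
    have h1 := hαlip.dist_le_mul (G zk1) (G zk + A d)
    have h2 := quad_taylor_aux hG hGlip zk zk1
    rw [← hA, ← hd] at h2
    have h3 : dist (G zk1) (G zk + A d) = ‖G zk1 - G zk - A d‖ := by
      rw [dist_eq_norm]; congr 1; abel
    rw [Real.dist_eq, h3] at h1
    have h4 : H (G zk1) - HL ≤ |H (G zk1) - HL| := le_abs_self _
    have h5 : (α:ℝ) * ‖G zk1 - G zk - A d‖ ≤ (α:ℝ) * ((β:ℝ)/2 * ‖d‖^2) :=
      mul_le_mul_of_nonneg_left h2 α.coe_nonneg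
    nlinarith
  -- Assemble
  rw [← ha, ← hb, ← EReal.coe_add, ← EReal.coe_add, ← EReal.coe_add,
    EReal.coe_le_coe_iff]
  have hq : ‖(1/ρ) • (zk - zk1)‖^2 = (1/ρ)^2 * ‖d‖^2 := by
    rw [norm_smul, Real.norm_eq_abs, abs_of_pos (by positivity : (0:ℝ) < 1/ρ),
      mul_pow, hd, norm_sub_rev]
  rw [hq]
  have hqq : ρ/2 * (2 - (α:ℝ)*(β:ℝ)*ρ) * ((1/ρ)^2 * ‖d‖^2)
      = 1/ρ * ‖d‖^2 - (α:ℝ) * ((β:ℝ)/2) * ‖d‖^2 := by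
    field_simp
  linarith [step1, step2]
end
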